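/- arXiv:2303.10290 — 2 statements merged into one kernel-verified Lean document; each statement's English description precedes it below -/
import Mathlib

section
/- For all integers $k \ge 1$ and all real $d \ge 1$, the ratio of rising factorials satisfies $(d^{1/2}/2)_k / (d/2)_k \le \gamma_1^{k-1} ((k-1)!)^{1/2} d^{-k/2}$, where $\gamma_1 = (1+\sqrt{3})/2$ and $(a)_k = a(a+1)\cdots(a+k-1)$ is the rising factorial (Pochhammer symbol). -/
/-- The rising factorial (Pochhammer symbol) `(a)_k = a (a+1) ⋯ (a+k-1)`. -/
def risingFac (a : ℝ) (k : ℕ) : ℝ := ∏ i ∈ Finset.range k, (a + i)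

lemma sqrt_fact_prod (m : ℕ) :
    ∏ i ∈ Finset.range m, Real.sqrt ((i : ℝ) + 1) = Real.sqrt (Nat.factorial m) := by
  induction m with
  | zero => simp
  | succ n ih =>
    rw [Finset.prod_range_succ, ih, Nat.factorial_succ, ← Real.sqrt_mul (by positivity)]
    push_cast
    ring_nf

lemma term_le (s j : ℝ) (hs : 1 ≤ s) (hj : 1 ≤ j) :
    (s / 2 + j) / (s ^ 2 / 2 + j) ≤ (1 + Real.sqrt 3) / 2 * Real.sqrt j / s := by
  have hsj : 1 ≤ Real.sqrt j := by
    rw [show (1:ℝ) = Real.sqrt 1 by simp]; exact Real.sqrt_le_sqrt hj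
  have hj2 : Real.sqrt j ^ 2 = j := Real.sq_sqrt (by linarith)
  have h3 : Real.sqrt 3 ^ 2 = 3 := Real.sq_sqrt (by norm_num)
  have h3' : (1:ℝ) ≤ Real.sqrt 3 := by
    rw [show (1:ℝ) = Real.sqrt 1 by simp]; exact Real.sqrt_le_sqrt (by norm_num)
  rw [div_le_div_iff₀ (by nlinarith) (by linarith)]
  set t := Real.sqrt j with ht
  rw [← hj2]
  nlinarith [h3, mul_nonneg (by linarith : (0:ℝ) ≤ t)
      (sq_nonneg (s - (1 + Real.sqrt 3) * t)),
    mul_nonneg (by linarith : (0:ℝ) ≤ t - 1) (sq_nonneg s),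
    mul_nonneg (mul_nonneg (by linarith : (0:ℝ) ≤ Real.sqrt 3 - 1) (by linarith : (0:ℝ) ≤ t))
      (sq_nonneg (s - (1 + Real.sqrt 3) * t))]

theorem stmt_1 (k : ℕ) (hk : 1 ≤ k) (d : ℝ) (hd : 1 ≤ d) :
    risingFac (Real.sqrt d / 2) k / risingFac (d / 2) k ≤
      ((1 + Real.sqrt 3) / 2) ^ (k - 1) * Real.sqrt (Nat.factorial (k - 1)) *
        ((Real.sqrt d) ^ k)⁻¹ := by
  obtain ⟨m, rfl⟩ : ∃ m, k = m + 1 := ⟨k - 1, (Nat.succ_pred_eq_of_pos hk).symm⟩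
  simp only [Nat.add_sub_cancel]
  set s := Real.sqrt d with hs
  have hs1 : 1 ≤ s := by
    rw [hs, show (1:ℝ) = Real.sqrt 1 by simp]; exact Real.sqrt_le_sqrt hd
  have hs0 : 0 < s := by linarith
  have hsd : s ^ 2 = d := Real.sq_sqrt (by linarith)
  have key : risingFac (s / 2) (m + 1) / risingFac (d / 2) (m + 1) =
      (∏ i ∈ Finset.range m, (s / 2 + ((i : ℝ) + 1)) / (d / 2 + ((i : ℝ) + 1))) * (1 / s) := by
    rw [risingFac, risingFac, ← Finset.prod_div_distrib, Finset.prod_range_succ']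
    congr 1
    · apply Finset.prod_congr rfl
      intro i _
      push_cast
      ring_nf
    · push_cast
      rw [← hsd]
      rw [add_zero, add_zero]
      field_simp
  rw [key]
  have hb : (∏ i ∈ Finset.range m, (s / 2 + ((i : ℝ) + 1)) / (d / 2 + ((i : ℝ) + 1)))
      ≤ ∏ i ∈ Finset.range m, (1 + Real.sqrt 3) / 2 * Real.sqrt ((i : ℝ) + 1) / s := by
    apply Finset.prod_le_prod
    · intro i _
      have : (0:ℝ) ≤ (i:ℝ) := Nat.cast_nonneg i
      positivity
    · intro i _
      have hi : (1:ℝ) ≤ (i:ℝ) + 1 := by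
        have : (0:ℝ) ≤ (i:ℝ) := Nat.cast_nonneg i
        linarith
      rw [← hsd]
      exact term_le s ((i:ℝ) + 1) hs1 hi
  have hprod : ∏ i ∈ Finset.range m, (1 + Real.sqrt 3) / 2 * Real.sqrt ((i : ℝ) + 1) / s
      = ((1 + Real.sqrt 3) / 2) ^ m * Real.sqrt (Nat.factorial m) / s ^ m := by
    rw [Finset.prod_div_distrib, Finset.prod_mul_distrib, Finset.prod_const,
      Finset.prod_const, sqrt_fact_prod, Finset.card_range]
  have hrhs : ((1 + Real.sqrt 3) / 2) ^ m * Real.sqrt (Nat.factorial m) / s ^ m * (1 / s)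
      = ((1 + Real.sqrt 3) / 2) ^ m * Real.sqrt (Nat.factorial m) * (s ^ (m + 1))⁻¹ := by
    rw [pow_succ]
    field_simp
  calc _ ≤ (∏ i ∈ Finset.range m, (1 + Real.sqrt 3) / 2 * Real.sqrt ((i : ℝ) + 1) / s) * (1/s) := by
        apply mul_le_mul_of_nonneg_right hb (by positivity)
    _ = _ := by rw [hprod, hrhs]
end

section
/- For any real symmetric $d\times d$ matrix $\Sigma$ and positive integer $k$, the zonal polynomial $C_{(k)}(\Sigma) = \frac{k!}{(1/2)_k} \sum_{i_1+2i_2+\cdots+ki_k=k} \prod_{j=1}^k \frac{(\mathrm{tr}(\Sigma^j))^{i_j}}{i_j!(2j)^{i_j}}$ satisfies $|C_{(k)}(\Sigma)| \le \frac{(d^{1/2}/2)_k}{(1/2)_k} \|\Sigma\|^k$, where $\|\Sigma\| = (\mathrm{tr}(\Sigma^2))^{1/2}$ and $(a)_k$ is the rising factorial. -/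
/-- The zonal polynomial `C_{(k)}` of a symmetric matrix, expressed by the
multi-sum over all tuples `(i_1, …, i_k)` of nonnegative integers with
`i_1 + 2 i_2 + ⋯ + k i_k = k`, parametrized by partitions of `k`
(where `i_j` is the number of parts of the partition equal to `j`). -/
noncomputable def zonalC (d k : ℕ) (A : Matrix (Fin d) (Fin d) ℝ) : ℝ :=
  (Nat.factorial k : ℝ) / risingFac (1 / 2) k *
    ∑ p : Nat.Partition k, ∏ j ∈ Finset.Icc 1 k,
      ((A ^ j).trace) ^ (p.parts.count j) /
        (Nat.factorial (p.parts.count j) * (2 * j) ^ (p.parts.count j))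

/-!
For a partition `p ⊢ k` with `c_j` parts equal to `j`, exactly `k! / ∏ⱼ c_j! j^{c_j}` permutations
of `k` letters have cycle type `p`, so `∑_{p ⊢ k} ∏ⱼ y^{c_j} / (c_j! j^{c_j}) = (y)_k / k!` (the
generating polynomial of permutations by number of cycles). Removing one part `j` from a partition
and using `∑ⱼ j c_j = k` gives the recursion `k Z_k = y ∑_{m<k} Z_m` for these sums `Z_k`, which
pins them down.

With `λ` the eigenvalues of `A` and `N = ‖λ‖₂`, we have `|λᵢ| ≤ N` and `∑ᵢ |λᵢ| ≤ √d N`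
(Cauchy–Schwarz), so `|tr A^j| ≤ √d N^j` for `j ≥ 1`. Bounding every trace in the zonal sum this
way leaves `N^k` times the sum above at `y = √d / 2`.
-/

open Finset

lemma risingFac_nonneg {a : ℝ} (ha : 0 ≤ a) (k : ℕ) : 0 ≤ risingFac a k :=
  prod_nonneg fun _ _ => by positivity

namespace Nat.Partition

lemma toFinset_parts_subset_Icc {n : ℕ} (p : n.Partition) : p.parts.toFinset ⊆ Icc 1 n :=
  fun _ hj => have hj := Multiset.mem_toFinset.mp hj
    mem_Icc.mpr ⟨p.parts_pos hj, p.le_of_mem_parts hj⟩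

lemma sum_mul_count_parts {n : ℕ} (p : n.Partition) :
    ∑ j ∈ Icc 1 n, j * p.parts.count j = n := by
  simpa [mul_comm, p.parts_sum] using
    (sum_multiset_count_of_subset p.parts _ p.toFinset_parts_subset_Icc).symm

end Nat.Partition

noncomputable def cycleWeight (y : ℝ) (s : Multiset ℕ) : ℝ :=
  ∏ j ∈ s.toFinset, y ^ s.count j / ((s.count j).factorial * (j : ℝ) ^ s.count j)

noncomputable def cycleWeightSum (y : ℝ) (n : ℕ) : ℝ :=
  ∑ p : n.Partition, cycleWeight y p.parts

lemma cycleWeight_eq_prod_of_subset (y : ℝ) {s : Multiset ℕ} {t : Finset ℕ}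
    (ht : s.toFinset ⊆ t) :
    cycleWeight y s = ∏ j ∈ t, y ^ s.count j / ((s.count j).factorial * (j : ℝ) ^ s.count j) :=
  prod_subset ht fun j _ hj => by
    simp [Multiset.count_eq_zero_of_notMem (by simpa using hj)]

lemma cycleWeight_cons (y : ℝ) {j : ℕ} (hj : j ≠ 0) (s : Multiset ℕ) :
    (j * (s.count j + 1)) * cycleWeight y (j ::ₘ s) = y * cycleWeight y s := by
  have hsub : s.toFinset ⊆ insert j s.toFinset := subset_insert _ _
  rw [cycleWeight_eq_prod_of_subset y hsub,
    cycleWeight_eq_prod_of_subset y (Multiset.toFinset_cons j s).le,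
    ← mul_prod_erase _ _ (mem_insert_self j _), ← mul_prod_erase _ _ (mem_insert_self j _),
    prod_congr rfl fun i hi => by rw [Multiset.count_cons_of_ne (ne_of_mem_erase hi)],
    Multiset.count_cons_self, Nat.factorial_succ]
  have : (j : ℝ) ≠ 0 := by exact_mod_cast hj
  push_cast
  field_simp
  ring

lemma sum_mul_count_mul_cycleWeight (y : ℝ) {n j : ℕ} (hj : j ∈ Icc 1 n) :
    ∑ p : n.Partition, (j * p.parts.count j) * cycleWeight y p.parts
      = y * cycleWeightSum y (n - j) := by
  obtain ⟨hj1, hjn⟩ := mem_Icc.mp hj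
  rw [← sum_filter_of_ne (p := fun p : n.Partition => j ∈ p.parts) fun p _ h =>
      by_contra fun hp => h (by simp [Multiset.count_eq_zero_of_notMem hp]),
    sum_subtype _ (p := fun p : n.Partition => j ∈ p.parts) (fun p => by simp),
    cycleWeightSum, mul_sum]
  refine Fintype.sum_equiv (Nat.Partition.partitionWithPartEquiv hj1 hjn) _ _ fun p => ?_
  have hcount : (p.1.parts.erase j).count j + 1 = p.1.parts.count j := by
    rw [← Multiset.count_cons_self, Multiset.cons_erase p.2]
  rw [Nat.Partition.partitionWithPartEquiv_apply_parts, ← cycleWeight_cons y (j := j) (by omega),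
    Multiset.cons_erase p.2, ← hcount]
  push_cast
  rfl

lemma natCast_mul_cycleWeightSum (y : ℝ) (n : ℕ) :
    n * cycleWeightSum y n = y * ∑ m ∈ range n, cycleWeightSum y m := by
  calc (n : ℝ) * cycleWeightSum y n
      = ∑ p : n.Partition, ∑ j ∈ Icc 1 n, (j * p.parts.count j) * cycleWeight y p.parts := by
        simp_rw [cycleWeightSum, mul_sum, ← sum_mul]
        refine sum_congr rfl fun p _ => ?_
        have h : (n : ℝ) = ∑ j ∈ Icc 1 n, (j * p.parts.count j : ℝ) := by
          exact_mod_cast p.sum_mul_count_parts.symm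
        rw [h]
    _ = y * ∑ j ∈ Icc 1 n, cycleWeightSum y (n - j) := by
        rw [sum_comm, mul_sum]
        exact sum_congr rfl fun j hj => sum_mul_count_mul_cycleWeight y hj
    _ = y * ∑ m ∈ range n, cycleWeightSum y m := by
        rw [← Ico_add_one_right_eq_Icc, sum_Ico_reflect _ _ le_rfl, range_eq_Ico]
        simp

lemma cycleWeightSum_eq_risingFac (y : ℝ) (n : ℕ) :
    cycleWeightSum y n = risingFac y n / n.factorial := by
  induction n with
  | zero => simp [cycleWeightSum, cycleWeight, risingFac]
  | succ n ih =>
    have hrec := natCast_mul_cycleWeightSum y (n + 1)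
    rw [sum_range_succ, mul_add, ← natCast_mul_cycleWeightSum, ih] at hrec
    rw [risingFac, prod_range_succ, ← risingFac, Nat.factorial_succ, eq_div_iff (by positivity)]
    push_cast at hrec ⊢
    field_simp at hrec
    linear_combination hrec

lemma abs_sum_pow_le {ι : Type*} [Fintype ι] (l : ι → ℝ) {j : ℕ} (hj : j ≠ 0) :
    |∑ i, l i ^ j| ≤ √(Fintype.card ι) * √(∑ i, l i ^ 2) ^ j := by
  set N := √(∑ i, l i ^ 2)
  have hle : ∀ i, |l i| ≤ N := fun i =>
    Real.abs_le_sqrt (single_le_sum (fun i _ => sq_nonneg (l i)) (mem_univ i))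
  have hCS : ∑ i, |l i| ≤ √(Fintype.card ι) * N := by
    rw [← Real.sqrt_mul (Nat.cast_nonneg _)]
    refine le_trans (le_abs_self _) (Real.abs_le_sqrt ?_)
    simpa using sq_sum_le_card_mul_sum_sq (s := univ) (f := fun i => |l i|)
  obtain ⟨m, rfl⟩ := Nat.exists_eq_add_one_of_ne_zero hj
  calc |∑ i, l i ^ (m + 1)| ≤ ∑ i, |l i| * |l i| ^ m := by
        simpa [pow_succ', abs_pow] using abs_sum_le_sum_abs (fun i => l i ^ (m + 1)) univ
    _ ≤ ∑ i, |l i| * N ^ m := by gcongr with i; exact hle i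
    _ ≤ √(Fintype.card ι) * N * N ^ m := by rw [← sum_mul]; gcongr
    _ = √(Fintype.card ι) * N ^ (m + 1) := by ring

namespace Matrix.IsHermitian

variable {n : Type*} [Fintype n] [DecidableEq n]

lemma trace_pow_eq_sum_eigenvalues_pow {𝕜 : Type*} [RCLike 𝕜] {A : Matrix n n 𝕜}
    (hA : A.IsHermitian) (j : ℕ) :
    (A ^ j).trace = ∑ i, (hA.eigenvalues i : 𝕜) ^ j := by
  conv_lhs => rw [hA.spectral_theorem]
  rw [← map_pow, Unitary.conjStarAlgAut_apply, trace_mul_cycle, Unitary.coe_star_mul_self,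
    one_mul, diagonal_pow, trace_diagonal]
  simp

lemma abs_trace_pow_le {A : Matrix n n ℝ} (hA : A.IsHermitian) {j : ℕ} (hj : j ≠ 0) :
    |(A ^ j).trace| ≤ √(Fintype.card n) * √((A ^ 2).trace) ^ j := by
  simpa [hA.trace_pow_eq_sum_eigenvalues_pow] using abs_sum_pow_le hA.eigenvalues hj

end Matrix.IsHermitian

lemma abs_prod_le_cycleWeight {k : ℕ} {t : ℕ → ℝ} {a N : ℝ}
    (ht : ∀ j, 1 ≤ j → |t j| ≤ a * N ^ j) (p : k.Partition) :
    |∏ j ∈ Icc 1 k, t j ^ p.parts.count j /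
        ((p.parts.count j).factorial * (2 * j) ^ p.parts.count j)|
      ≤ N ^ k * cycleWeight (a / 2) p.parts := by
  have hterm : ∀ j ∈ Icc 1 k,
      |t j ^ p.parts.count j / ((p.parts.count j).factorial * (2 * j) ^ p.parts.count j)|
        ≤ N ^ (j * p.parts.count j) * ((a / 2) ^ p.parts.count j /
          ((p.parts.count j).factorial * (j : ℝ) ^ p.parts.count j)) := by
    intro j hj
    set c := p.parts.count j
    have hj1 : 1 ≤ j := (mem_Icc.mp hj).1
    have hj0 : (0 : ℝ) < j := by exact_mod_cast hj1
    have hden : (0 : ℝ) < c.factorial * (2 * j) ^ c := by positivity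
    calc _ = |t j| ^ c / (c.factorial * (2 * j) ^ c) := by
          rw [abs_div, abs_pow, abs_of_pos hden]
      _ ≤ (a * N ^ j) ^ c / (c.factorial * (2 * j) ^ c) := by
          gcongr; exact ht j hj1
      _ = _ := by
          rw [pow_mul, mul_pow, mul_pow, div_pow]
          field_simp
  calc _ ≤ ∏ j ∈ Icc 1 k, N ^ (j * p.parts.count j) * ((a / 2) ^ p.parts.count j /
          ((p.parts.count j).factorial * (j : ℝ) ^ p.parts.count j)) := by
        rw [abs_prod]; exact prod_le_prod (fun _ _ => abs_nonneg _) hterm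
    _ = N ^ k * cycleWeight (a / 2) p.parts := by
        rw [prod_mul_distrib, prod_pow_eq_pow_sum, p.sum_mul_count_parts,
          cycleWeight_eq_prod_of_subset _ p.toFinset_parts_subset_Icc]

lemma abs_sum_partition_prod_le {k : ℕ} {t : ℕ → ℝ} {a N : ℝ}
    (ht : ∀ j, 1 ≤ j → |t j| ≤ a * N ^ j) :
    |∑ p : k.Partition, ∏ j ∈ Icc 1 k, t j ^ p.parts.count j /
        ((p.parts.count j).factorial * (2 * j) ^ p.parts.count j)|
      ≤ N ^ k * (risingFac (a / 2) k / k.factorial) := by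
  calc _ ≤ ∑ p : k.Partition, N ^ k * cycleWeight (a / 2) p.parts :=
        (abs_sum_le_sum_abs _ _).trans (sum_le_sum fun p _ => abs_prod_le_cycleWeight ht p)
    _ = _ := by rw [← mul_sum, ← cycleWeightSum, cycleWeightSum_eq_risingFac]

theorem stmt_14_general (d : ℕ) (A : Matrix (Fin d) (Fin d) ℝ) (hA : A.IsSymm)
    (k : ℕ) :
    |zonalC d k A| ≤
      risingFac (Real.sqrt d / 2) k / risingFac (1 / 2) k *
        Real.sqrt ((A ^ 2).trace) ^ k := by
  have htrace : ∀ j, 1 ≤ j → |(A ^ j).trace| ≤ √d * √((A ^ 2).trace) ^ j := fun j hj => by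
    simpa using (Matrix.isHermitian_iff_isSymm.mpr hA).abs_trace_pow_le (by omega : j ≠ 0)
  have hcoef : 0 ≤ (k.factorial : ℝ) / risingFac (1 / 2) k :=
    div_nonneg (Nat.cast_nonneg _) (risingFac_nonneg (by norm_num) k)
  rw [zonalC, abs_mul, abs_of_nonneg hcoef]
  calc _ ≤ (k.factorial : ℝ) / risingFac (1 / 2) k *
        (√((A ^ 2).trace) ^ k * (risingFac (√d / 2) k / k.factorial)) := by
        gcongr; exact abs_sum_partition_prod_le htrace
    _ = _ := by field_simp

theorem stmt_14 (d : ℕ) (A : Matrix (Fin d) (Fin d) ℝ) (hA : A.IsSymm)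
    (k : ℕ) (hk : 1 ≤ k) :
    |zonalC d k A| ≤
      risingFac (Real.sqrt d / 2) k / risingFac (1 / 2) k *
        Real.sqrt ((A ^ 2).trace) ^ k :=
  stmt_14_general d A hA k
end
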